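/- arXiv:1212.1943 — 4 statements merged into one kernel-verified Lean document; each statement's English description precedes it below -/
import Mathlib

section
/- Let Γ be a graph and let Γ₀ be a subgraph with connected components Γ₁, …, Γₙ. Let Γ′ be the graph obtained from Γ by collapsing each component Γᵢ to a single vertex gᵢ ∈ Γᵢ (identifying all vertices of Γᵢ to gᵢ and deleting the edges of Γᵢ). Then Γ is a forest relative to Γ₀ if and only if Γ′ is a forest. -/
/-- A multigraph: each element of the edge index type `E` has two (possibly equal)
endpoints in `V`; loops and multiple edges are allowed. -/
structure Multigraph (V E : Type) where
  fst : E → V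
  snd : E → V

namespace Multigraph

variable {V E : Type}

/-- The initial vertex of a dart (an edge together with an orientation). -/
def dstart (G : Multigraph V E) (d : E × Bool) : V := if d.2 then G.fst d.1 else G.snd d.1

/-- The final vertex of a dart. -/
def dfin (G : Multigraph V E) (d : E × Bool) : V := if d.2 then G.snd d.1 else G.fst d.1

/-- An edge cycle: a nonempty list of darts in which consecutive darts match up, cyclically. -/
def IsCycle (G : Multigraph V E) (c : List (E × Bool)) : Prop :=
  c ≠ [] ∧ List.Chain' (fun d d' => G.dfin d = G.dstart d') c ∧
    ∀ h : c ≠ [], G.dfin (c.getLast h) = G.dstart (c.head h)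

/-- A cycle is homology reduced relative to an edge set `E₀` if it does not contain a
pair of darts, with underlying edge outside `E₀`, that are reverses of each other. -/
def HomReducedRel (E₀ : Set E) (c : List (E × Bool)) : Prop :=
  ∀ d ∈ c, d.1 ∉ E₀ → (d.1, !d.2) ∉ c

/-- A cycle is homology reduced if it does not contain a dart together with its reverse. -/
def HomReduced (c : List (E × Bool)) : Prop := HomReducedRel (∅ : Set E) c

/-- `G` is a forest relative to the subgraph with edge set `E₀`: every cycle which is
homology reduced relative to `E₀` is contained in `E₀`. -/
def IsForestRel (G : Multigraph V E) (E₀ : Set E) : Prop :=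
  ∀ c, G.IsCycle c → HomReducedRel E₀ c → ∀ d ∈ c, d.1 ∈ E₀

/-- A forest: there is no nonempty homology reduced cycle. -/
def IsForest (G : Multigraph V E) : Prop := G.IsForestRel ∅

/-- Two vertices are adjacent if they are the two endpoints of some edge. -/
def Adj (G : Multigraph V E) (v w : V) : Prop :=
  ∃ e, (G.fst e = v ∧ G.snd e = w) ∨ (G.fst e = w ∧ G.snd e = v)

/-- A multigraph is connected if any two vertices are joined by an edge path. -/
def Connected (G : Multigraph V E) : Prop := ∀ v w, Relation.ReflTransGen G.Adj v w

/-- A tree: connected and a forest. -/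
def IsTree (G : Multigraph V E) : Prop := G.Connected ∧ G.IsForest

/-- A tree relative to the subgraph with edge set `E₀`. -/
def IsTreeRel (G : Multigraph V E) (E₀ : Set E) : Prop := G.Connected ∧ G.IsForestRel E₀

/-- Reachability inside the subgraph with edge set `E₀`. -/
def ReachIn (G : Multigraph V E) (E₀ : Set E) : V → V → Prop :=
  Relation.ReflTransGen fun a b =>
    ∃ e ∈ E₀, (G.fst e = a ∧ G.snd e = b) ∨ (G.fst e = b ∧ G.snd e = a)

end Multigraph

/-!
A closed walk in `Γ` projects to a closed walk in the collapsed graph `Γ'` by forgetting its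
darts in `Γ₀`; conversely a closed walk in `Γ'` lifts to one in `Γ` by joining consecutive
darts through paths inside the connected components of `Γ₀`.  Both operations keep the darts
outside `Γ₀` unchanged, so homology reduced cycles relative to `Γ₀` leaving `Γ₀` correspond
to nonempty homology reduced cycles of `Γ'`.
-/

namespace Multigraph

variable {V E : Type}

def IsWalk (G : Multigraph V E) : V → List (E × Bool) → V → Prop
  | x, [], y => x = y
  | x, d :: l, y => G.dstart d = x ∧ IsWalk G (G.dfin d) l y

variable {G : Multigraph V E}

theorem IsWalk.append {x m y : V} {l₁ l₂ : List (E × Bool)} (h₁ : G.IsWalk x l₁ m)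
    (h₂ : G.IsWalk m l₂ y) : G.IsWalk x (l₁ ++ l₂) y := by
  induction l₁ generalizing x with
  | nil => cases h₁; exact h₂
  | cons d l ih => exact ⟨h₁.1, ih h₁.2⟩

theorem isWalk_cons_iff {x y : V} {d : E × Bool} {l : List (E × Bool)} :
    G.IsWalk x (d :: l) y ↔ G.dstart d = x ∧
      List.IsChain (fun d d' => G.dfin d = G.dstart d') (d :: l) ∧
        G.dfin ((d :: l).getLast (List.cons_ne_nil d l)) = y := by
  induction l generalizing x d with
  | nil => simp [IsWalk]
  | cons d' l ih =>
    simp only [IsWalk] at ih ⊢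
    rw [ih, List.isChain_cons_cons, List.getLast_cons (List.cons_ne_nil d' l)]
    constructor
    · rintro ⟨hd, hd', hchain, hlast⟩
      exact ⟨hd, ⟨hd'.symm, hchain⟩, hlast⟩
    · rintro ⟨hd, ⟨hd', hchain⟩, hlast⟩
      exact ⟨hd, hd'.symm, hchain, hlast⟩

theorem isCycle_iff_exists_isWalk {c : List (E × Bool)} :
    G.IsCycle c ↔ c ≠ [] ∧ ∃ x, G.IsWalk x c x := by
  cases c with
  | nil => simp [IsCycle]
  | cons d l =>
    constructor
    · rintro ⟨hne, hchain, hclosed⟩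
      exact ⟨hne, _, isWalk_cons_iff.2 ⟨rfl, hchain, hclosed hne⟩⟩
    · rintro ⟨hne, x, hx⟩
      obtain ⟨rfl, hchain, hclosed⟩ := isWalk_cons_iff.1 hx
      exact ⟨hne, hchain, fun _ => hclosed⟩

theorem ReachIn.symm {E₀ : Set E} {x y : V} (h : G.ReachIn E₀ x y) : G.ReachIn E₀ y x :=
  Relation.ReflTransGen.mono (fun _ _ ⟨e, he, hends⟩ => ⟨e, he, hends.symm⟩) _ _ h.swap

theorem ReachIn.exists_isWalk {E₀ : Set E} {x y : V} (h : G.ReachIn E₀ x y) :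
    ∃ l, G.IsWalk x l y ∧ ∀ d ∈ l, d.1 ∈ E₀ := by
  induction h with
  | refl => exact ⟨[], rfl, by simp⟩
  | tail _ hstep ih =>
    obtain ⟨l, hl, hlE₀⟩ := ih
    obtain ⟨e, he, ⟨hfst, hsnd⟩ | ⟨hfst, hsnd⟩⟩ := hstep
    · refine ⟨l ++ [(e, true)], hl.append ⟨hfst, hsnd⟩, ?_⟩
      exact List.forall_mem_append.2 ⟨hlE₀, List.forall_mem_singleton.2 he⟩
    · refine ⟨l ++ [(e, false)], hl.append ⟨hsnd, hfst⟩, ?_⟩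
      exact List.forall_mem_append.2 ⟨hlE₀, List.forall_mem_singleton.2 he⟩

def collapse (G : Multigraph V E) (E₀ : Set E) (π : V → V) : Multigraph V {e : E // e ∉ E₀} :=
  ⟨fun e => π (G.fst e.1), fun e => π (G.snd e.1)⟩

theorem collapse_dstart {E₀ : Set E} {π : V → V} (d : {e : E // e ∉ E₀} × Bool) :
    (G.collapse E₀ π).dstart d = π (G.dstart (d.1.1, d.2)) := by
  obtain ⟨e, _ | _⟩ := d <;> rfl

theorem collapse_dfin {E₀ : Set E} {π : V → V} (d : {e : E // e ∉ E₀} × Bool) :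
    (G.collapse E₀ π).dfin d = π (G.dfin (d.1.1, d.2)) := by
  obtain ⟨e, _ | _⟩ := d <;> rfl

open Classical in
noncomputable def restrictDart (E₀ : Set E) (d : E × Bool) : Option ({e : E // e ∉ E₀} × Bool) :=
  if h : d.1 ∈ E₀ then none else some (⟨d.1, h⟩, d.2)

theorem restrictDart_of_mem {E₀ : Set E} {d : E × Bool} (h : d.1 ∈ E₀) :
    restrictDart E₀ d = none := by
  simp [restrictDart, h]

theorem restrictDart_of_notMem {E₀ : Set E} {d : E × Bool} (h : d.1 ∉ E₀) :
    restrictDart E₀ d = some (⟨d.1, h⟩, d.2) := by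
  simp [restrictDart, h]

theorem restrictDart_eq_some_iff {E₀ : Set E} {d : E × Bool} {d' : {e : E // e ∉ E₀} × Bool} :
    restrictDart E₀ d = some d' ↔ d = (d'.1.1, d'.2) := by
  by_cases h : d.1 ∈ E₀
  · simp only [restrictDart_of_mem h, reduceCtorEq, false_iff]
    rintro rfl
    exact d'.1.2 h
  · rw [restrictDart_of_notMem h, Option.some.injEq]
    constructor
    · rintro rfl; rfl
    · rintro rfl; rfl

theorem mem_filterMap_restrictDart {E₀ : Set E} {c : List (E × Bool)}
    {d' : {e : E // e ∉ E₀} × Bool} :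
    d' ∈ c.filterMap (restrictDart E₀) ↔ (d'.1.1, d'.2) ∈ c := by
  simp [List.mem_filterMap, restrictDart_eq_some_iff]

theorem filterMap_restrictDart_eq_nil {E₀ : Set E} {c : List (E × Bool)} :
    c.filterMap (restrictDart E₀) = [] ↔ ∀ d ∈ c, d.1 ∈ E₀ := by
  simp only [List.filterMap_eq_nil_iff, restrictDart, dite_eq_left_iff, reduceCtorEq, imp_false,
    not_not]

theorem homReduced_filterMap_restrictDart {E₀ : Set E} {c : List (E × Bool)} :
    HomReduced (c.filterMap (restrictDart E₀)) ↔ HomReducedRel E₀ c := by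
  constructor
  · intro hred d hd hdE₀ hrev
    exact hred (⟨d.1, hdE₀⟩, d.2) (mem_filterMap_restrictDart.2 hd) (Set.notMem_empty _)
      (mem_filterMap_restrictDart.2 hrev)
  · intro hred d' hd' _ hrev
    exact hred _ (mem_filterMap_restrictDart.1 hd') d'.1.2 (mem_filterMap_restrictDart.1 hrev)

section Collapse

variable {E₀ : Set E} {π : V → V}

theorem IsWalk.collapse (hE₀ : ∀ e ∈ E₀, π (G.fst e) = π (G.snd e)) {x y : V}
    {l : List (E × Bool)} (hl : G.IsWalk x l y) :
    (G.collapse E₀ π).IsWalk (π x) (l.filterMap (restrictDart E₀)) (π y) := by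
  induction l generalizing x with
  | nil => exact congrArg π hl
  | cons d l ih =>
    obtain ⟨rfl, hl⟩ := hl
    by_cases hd : d.1 ∈ E₀
    · have hπd : π (G.dstart d) = π (G.dfin d) := by
        obtain ⟨e, _ | _⟩ := d
        exacts [(hE₀ e hd).symm, hE₀ e hd]
      rw [List.filterMap_cons_none (restrictDart_of_mem hd), hπd]
      exact ih hl
    · rw [List.filterMap_cons_some (restrictDart_of_notMem hd)]
      exact ⟨collapse_dstart _, (collapse_dfin _).symm ▸ ih hl⟩

theorem IsWalk.exists_lift (hπ : ∀ x y, π x = π y → G.ReachIn E₀ x y)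
    {a b : V} {l' : List ({e : E // e ∉ E₀} × Bool)} (hl' : (G.collapse E₀ π).IsWalk a l' b)
    (x : V) (hx : π x = a) :
    ∃ l y, G.IsWalk x l y ∧ π y = b ∧ l.filterMap (restrictDart E₀) = l' := by
  induction l' generalizing a x with
  | nil => exact ⟨[], x, rfl, hx.trans hl', rfl⟩
  | cons d' l' ih =>
    obtain ⟨hstart, hl'⟩ := hl'
    let d : E × Bool := (d'.1.1, d'.2)
    obtain ⟨l₀, hl₀, hl₀E₀⟩ :=
      (hπ x (G.dstart d) (by rw [hx, ← hstart, collapse_dstart])).exists_isWalk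
    obtain ⟨l, y, hl, hy, hfilter⟩ := ih hl' (G.dfin d) (collapse_dfin d').symm
    refine ⟨l₀ ++ d :: l, y, hl₀.append ⟨rfl, hl⟩, hy, ?_⟩
    rw [List.filterMap_append, filterMap_restrictDart_eq_nil.2 hl₀E₀,
      List.filterMap_cons_some (restrictDart_of_notMem d'.1.2), hfilter]
    rfl

theorem IsCycle.collapse (hE₀ : ∀ e ∈ E₀, π (G.fst e) = π (G.snd e)) {c : List (E × Bool)}
    (hc : G.IsCycle c) (hne : c.filterMap (restrictDart E₀) ≠ []) :
    (G.collapse E₀ π).IsCycle (c.filterMap (restrictDart E₀)) := by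
  obtain ⟨-, x, hx⟩ := isCycle_iff_exists_isWalk.1 hc
  exact isCycle_iff_exists_isWalk.2 ⟨hne, π x, hx.collapse hE₀⟩

theorem IsCycle.exists_lift (hπ : ∀ x y, π x = π y → G.ReachIn E₀ x y)
    {c' : List ({e : E // e ∉ E₀} × Bool)} (hc' : (G.collapse E₀ π).IsCycle c') :
    ∃ c, G.IsCycle c ∧ c.filterMap (restrictDart E₀) = c' := by
  obtain ⟨hne, a, ha⟩ := isCycle_iff_exists_isWalk.1 hc'
  obtain ⟨d', l', rfl⟩ := List.exists_cons_of_ne_nil hne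
  let x := G.dstart (d'.1.1, d'.2)
  have hx : π x = a := (collapse_dstart d').symm.trans ha.1
  obtain ⟨l, y, hl, hy, hfilter⟩ := ha.exists_lift hπ x hx
  obtain ⟨l₀, hl₀, hl₀E₀⟩ := (hπ y x (hy.trans hx.symm)).exists_isWalk
  have hfilter' : (l ++ l₀).filterMap (restrictDart E₀) = d' :: l' := by
    rw [List.filterMap_append, hfilter, filterMap_restrictDart_eq_nil.2 hl₀E₀, List.append_nil]
  refine ⟨l ++ l₀, isCycle_iff_exists_isWalk.2 ⟨?_, x, hl.append hl₀⟩, hfilter'⟩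
  rintro hnil
  simp [hnil] at hfilter'

theorem isForestRel_iff_isForest_collapse (hE₀ : ∀ e ∈ E₀, π (G.fst e) = π (G.snd e))
    (hπ : ∀ x y, π x = π y → G.ReachIn E₀ x y) :
    G.IsForestRel E₀ ↔ (G.collapse E₀ π).IsForest := by
  constructor
  · intro hG c' hc' hred' d' hd'
    obtain ⟨c, hc, rfl⟩ := hc'.exists_lift hπ
    have hcE₀ := hG c hc (homReduced_filterMap_restrictDart.1 hred')
    simp [filterMap_restrictDart_eq_nil.2 hcE₀] at hd'
  · intro hG' c hc hred
    by_contra hleaves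
    have hne : c.filterMap (restrictDart E₀) ≠ [] := mt filterMap_restrictDart_eq_nil.1 hleaves
    exact hG' _ (hc.collapse hE₀ hne) (homReduced_filterMap_restrictDart.2 hred) _
      (List.head_mem hne)

end Collapse

end Multigraph

/-- **Collapsing the components of a subgraph.**
Let `Γ` be a multigraph, `Γ₀` the subgraph given by the vertex set `V₀` and the edge
set `E₀`, and let `π : V → V` collapse each connected component of `Γ₀` to a chosen
vertex of that component, leaving all other vertices fixed.  Let `Γ'` be the graph
obtained from `Γ` by deleting the edges of `Γ₀` and identifying vertices along `π`.
Then `Γ` is a forest relative to `Γ₀` if and only if `Γ'` is a forest. -/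
theorem forestRel_iff_collapse_forest {V E : Type} (G : Multigraph V E)
    (V₀ : Set V) (E₀ : Set E)
    (hsub : ∀ e ∈ E₀, G.fst e ∈ V₀ ∧ G.snd e ∈ V₀)
    (π : V → V)
    (hfix : ∀ v ∉ V₀, π v = v)
    (hcomp : ∀ v ∈ V₀, G.ReachIn E₀ v (π v))
    (hglue : ∀ v ∈ V₀, ∀ w ∈ V₀, (π v = π w ↔ G.ReachIn E₀ v w)) :
    G.IsForestRel E₀ ↔
      Multigraph.IsForest
        (⟨fun e : {e : E // e ∉ E₀} => π (G.fst e.1),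
          fun e : {e : E // e ∉ E₀} => π (G.snd e.1)⟩ : Multigraph V {e : E // e ∉ E₀}) := by
  have hE₀ : ∀ e ∈ E₀, π (G.fst e) = π (G.snd e) := fun e he =>
    (hglue _ (hsub e he).1 _ (hsub e he).2).2 (.single ⟨e, he, .inl ⟨rfl, rfl⟩⟩)
  have hfibre : ∀ x y, π x = π y → G.ReachIn E₀ x y := by
    intro x y hxy
    by_cases hx : x ∈ V₀ <;> by_cases hy : y ∈ V₀
    · exact (hglue x hx y hy).1 hxy
    · rw [hfix y hy] at hxy
      exact hxy ▸ hcomp x hx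
    · rw [hfix x hx] at hxy
      exact (hxy ▸ hcomp y hy).symm
    · rw [hfix x hx, hfix y hy] at hxy
      exact hxy ▸ .refl
  exact Multigraph.isForestRel_iff_isForest_collapse hE₀ hfibre
end

section
/- Let P be a labeled oriented tree and let T₁ and T₂ be two distinct maximal proper sub-LOTs of P with T₁ ∩ T₂ ≠ ∅. Then P = T₁ ∪ T₂. -/
/-- A labeled oriented graph (LOG): each edge `e` has an initial vertex `init e`,
a terminal vertex `term e`, and a label `label e`, which is a vertex.
An edge `e = [x,z,y]` has `init e = x`, `label e = z`, `term e = y`. -/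
structure LOG (V E : Type) where
  init : E → V
  label : E → V
  term : E → V

namespace LOG

variable {V E : Type}

/-- The underlying simple graph of a LOG. -/
def graph (G : LOG V E) : SimpleGraph V :=
  SimpleGraph.fromRel fun a b => ∃ e, G.init e = a ∧ G.term e = b

/-- The underlying unoriented multigraph is a tree: there are no loops, distinct
edges have distinct endpoint pairs, and the underlying simple graph is a tree. -/
def IsTreeGraph (G : LOG V E) : Prop :=
  (∀ e, G.init e ≠ G.term e) ∧
    Function.Injective (fun e => s(G.init e, G.term e)) ∧ G.graph.IsTree

/-- A LOG is injective if each vertex occurs at most once as an edge label. -/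
def InjectiveLabels (G : LOG V E) : Prop := Function.Injective G.label

/-- The simple graph induced by a subgraph, given by a vertex set `VS` and an edge set `ES`. -/
def subgraph (G : LOG V E) (VS : Set V) (ES : Set E) : SimpleGraph VS :=
  SimpleGraph.fromRel fun a b => ∃ e ∈ ES, G.init e = (a : V) ∧ G.term e = (b : V)

/-- A sub-LOT: a connected subgraph containing at least one edge, all of whose
edge labels are vertices of the subgraph. -/
structure IsSubLOT (G : LOG V E) (VS : Set V) (ES : Set E) : Prop where
  edge_nonempty : ES.Nonempty
  init_mem : ∀ e ∈ ES, G.init e ∈ VS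
  term_mem : ∀ e ∈ ES, G.term e ∈ VS
  label_mem : ∀ e ∈ ES, G.label e ∈ VS
  connected : (G.subgraph VS ES).Connected

end LOG

namespace LOG

variable {V E : Type}

/-- A proper sub-LOT: a sub-LOT that is not all of `G`. -/
def IsProperSubLOT (G : LOG V E) (VS : Set V) (ES : Set E) : Prop :=
  G.IsSubLOT VS ES ∧ ¬(VS = Set.univ ∧ ES = Set.univ)

/-- A maximal proper sub-LOT: a proper sub-LOT not properly contained in any
other proper sub-LOT. -/
def IsMaxProperSubLOT (G : LOG V E) (VS : Set V) (ES : Set E) : Prop :=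
  G.IsProperSubLOT VS ES ∧
    ∀ VS' ES', G.IsProperSubLOT VS' ES' → VS ⊆ VS' → ES ⊆ ES' → VS = VS' ∧ ES = ES'

end LOG


private def subgraphHom {V E : Type} (G : LOG V E)
    {VS VS' : Set V} {ES ES' : Set E} (hV : VS ⊆ VS') (hE : ES ⊆ ES') :
    G.subgraph VS ES →g G.subgraph VS' ES' where
  toFun := fun x => ⟨x.1, hV x.2⟩
  map_rel' := by
    rintro ⟨x, hx⟩ ⟨y, hy⟩ hadj
    simp only [LOG.subgraph, SimpleGraph.fromRel_adj] at *
    refine ⟨by simpa [Subtype.ext_iff] using hadj.1, ?_⟩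
    rcases hadj.2 with ⟨e, he, h1, h2⟩ | ⟨e, he, h1, h2⟩
    · exact Or.inl ⟨e, hE he, h1, h2⟩
    · exact Or.inr ⟨e, hE he, h1, h2⟩

private lemma reachable_mono {V E : Type} (G : LOG V E)
    {VS VS' : Set V} {ES ES' : Set E} (hV : VS ⊆ VS') (hE : ES ⊆ ES')
    {a b : V} (ha : a ∈ VS) (hb : b ∈ VS)
    (h : (G.subgraph VS ES).Reachable ⟨a, ha⟩ ⟨b, hb⟩) :
    (G.subgraph VS' ES').Reachable ⟨a, hV ha⟩ ⟨b, hV hb⟩ :=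
  h.map (subgraphHom G hV hE)

/-- **Two intersecting maximal proper sub-LOTs cover.**
Let `P` be a labeled oriented tree and let `T₁ = (VS₁, ES₁)` and `T₂ = (VS₂, ES₂)` be two
distinct maximal proper sub-LOTs of `P` with `T₁ ∩ T₂ ≠ ∅`.  Then `P = T₁ ∪ T₂`. -/
theorem maximal_sublots_cover {V E : Type} [Fintype V] [Fintype E]
    (P : LOG V E) (htree : P.IsTreeGraph)
    (VS₁ VS₂ : Set V) (ES₁ ES₂ : Set E)
    (h₁ : P.IsMaxProperSubLOT VS₁ ES₁) (h₂ : P.IsMaxProperSubLOT VS₂ ES₂)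
    (hdist : ¬(VS₁ = VS₂ ∧ ES₁ = ES₂))
    (hne : (VS₁ ∩ VS₂).Nonempty) :
    VS₁ ∪ VS₂ = Set.univ ∧ ES₁ ∪ ES₂ = Set.univ := by
  obtain ⟨w, hw1, hw2⟩ := hne
  have hsub : P.IsSubLOT (VS₁ ∪ VS₂) (ES₁ ∪ ES₂) := by
    refine ⟨h₁.1.1.edge_nonempty.mono Set.subset_union_left, ?_, ?_, ?_, ?_⟩
    · rintro e (he | he)
      · exact Or.inl (h₁.1.1.init_mem e he)
      · exact Or.inr (h₂.1.1.init_mem e he)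
    · rintro e (he | he)
      · exact Or.inl (h₁.1.1.term_mem e he)
      · exact Or.inr (h₂.1.1.term_mem e he)
    · rintro e (he | he)
      · exact Or.inl (h₁.1.1.label_mem e he)
      · exact Or.inr (h₂.1.1.label_mem e he)
    · have key : ∀ x : (VS₁ ∪ VS₂ : Set V),
          (P.subgraph (VS₁ ∪ VS₂) (ES₁ ∪ ES₂)).Reachable x ⟨w, Or.inl hw1⟩ := by
        rintro ⟨x, hx | hx⟩
        · exact reachable_mono P Set.subset_union_left Set.subset_union_left hx hw1
            (h₁.1.1.connected.preconnected ⟨x, hx⟩ ⟨w, hw1⟩)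
        · exact reachable_mono P Set.subset_union_right Set.subset_union_right hx hw2
            (h₂.1.1.connected.preconnected ⟨x, hx⟩ ⟨w, hw2⟩)
      haveI : Nonempty (VS₁ ∪ VS₂ : Set V) := ⟨⟨w, Or.inl hw1⟩⟩
      exact ⟨fun u v => (key u).trans (key v).symm⟩
  by_cases hu : VS₁ ∪ VS₂ = Set.univ ∧ ES₁ ∪ ES₂ = Set.univ
  · exact hu
  · have hp : P.IsProperSubLOT (VS₁ ∪ VS₂) (ES₁ ∪ ES₂) := ⟨hsub, hu⟩
    obtain ⟨e1, e2⟩ := h₁.2 _ _ hp Set.subset_union_left Set.subset_union_left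
    obtain ⟨f1, f2⟩ := h₂.2 _ _ hp Set.subset_union_right Set.subset_union_right
    exact absurd ⟨e1.trans f1.symm, e2.trans f2.symm⟩ hdist
end

section
/- Let P be a labeled oriented tree whose maximal proper sub-LOTs T₁, …, Tₙ are pairwise disjoint, let T = T₁ ∪ … ∪ Tₙ, and assume P is injective relative to T. Let Q be a reorientation of P in which only edges of P − T are reversed, and let S be the set of labels of the reversed edges (so each element of S occurs exactly once as an edge label in P). Let P = P(P), Q = P(Q), and let P_S be the presentation obtained from P by replacing, in every relator, each occurrence x by x^{-1} and each occurrence x^{-1} by x for every x ∈ S. Then the Whitehead graphs W(P_S) and W(Q) are equal, and moreover W((P/T)_S) and W(Q/T) are equal. -/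
/-- A word in generators `X` and their inverses: a letter `(x, true)` is `x`,
a letter `(x, false)` is `x⁻¹`. -/
abbrev Word (X : Type) := List (X × Bool)

/-- The total exponent sum of a word. -/
def expSum {X : Type} (w : Word X) : ℤ := (w.map fun l => if l.2 then (1 : ℤ) else -1).sum

/-- A word is cyclically reduced: it is reduced and its last letter is not the
inverse of its first letter. -/
def IsCyclicallyReduced {X : Type} (w : Word X) : Prop :=
  List.Chain' (fun l l' => ¬(l.1 = l'.1 ∧ l.2 = !l'.2)) w ∧
    ∀ h : w ≠ [], ¬((w.getLast h).1 = (w.head h).1 ∧ (w.getLast h).2 = !(w.head h).2)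

/-- The corners of a family of relator words: one for each position in each relator. -/
def Corners {X ι : Type} (rel : ι → Word X) : Type := Σ j : ι, Fin (rel j).length

/-- The Whitehead graph of a family of relator words, as a multigraph on the vertex set
`{x⁺, x⁻ : x ∈ X}`, where `x⁺ = (x, true)` and `x⁻ = (x, false)`: each occurrence of a
cyclic subword `a^ε b^δ` contributes a corner joining `a⁻` (if `ε = 1`) or `a⁺`
(if `ε = -1`) to `b⁺` (if `δ = 1`) or `b⁻` (if `δ = -1`). -/
def whitehead {X ι : Type} (rel : ι → Word X) : Multigraph (X × Bool) (Corners rel) where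
  fst d := (((rel d.1).get d.2).1, !((rel d.1).get d.2).2)
  snd d := (rel d.1).get ⟨((d.2 : ℕ) + 1) % (rel d.1).length, Nat.mod_lt _ d.2.pos⟩

/-- The corners with both endpoints positive vertices. -/
def posCorners {X ι : Type} (rel : ι → Word X) : Set (Corners rel) :=
  { d | ((whitehead rel).fst d).2 = true ∧ ((whitehead rel).snd d).2 = true }

/-- The corners with both endpoints negative vertices. -/
def negCorners {X ι : Type} (rel : ι → Word X) : Set (Corners rel) :=
  { d | ((whitehead rel).fst d).2 = false ∧ ((whitehead rel).snd d).2 = false }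

/-- The positive graph `W⁺`: the full subgraph of the Whitehead graph on the
positive vertices `x⁺`, viewed as a multigraph on `X`. -/
def Wpos {X ι : Type} (rel : ι → Word X) : Multigraph X (posCorners rel) where
  fst d := ((whitehead rel).fst d.1).1
  snd d := ((whitehead rel).snd d.1).1

/-- The negative graph `W⁻`: the full subgraph of the Whitehead graph on the
negative vertices `x⁻`, viewed as a multigraph on `X`. -/
def Wneg {X ι : Type} (rel : ι → Word X) : Multigraph X (negCorners rel) where
  fst d := ((whitehead rel).fst d.1).1
  snd d := ((whitehead rel).snd d.1).1

/-- A presentation with relator family `rel` satisfies the Stallings test relative to the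
sub-presentation whose relators are indexed by `ιT`: every relator has exponent sum zero,
and `W⁺` or `W⁻` is a forest relative to the corresponding subgraph of corners coming
from relators indexed by `ιT`. -/
def StallingsRel {X ι : Type} (rel : ι → Word X) (ιT : Set ι) : Prop :=
  (∀ j, expSum (rel j) = 0) ∧
    ((Wpos rel).IsForestRel { d : posCorners rel | (d : Corners rel).1 ∈ ιT } ∨
     (Wneg rel).IsForestRel { d : negCorners rel | (d : Corners rel).1 ∈ ιT })

/-- The words in the generators of `Xs` and their inverses with exponent sum zero
(not necessarily reduced). -/
def ZWords {X : Type} (Xs : Set X) : Type :=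
  { w : Word X // (∀ l ∈ w, l.1 ∈ Xs) ∧ expSum w = 0 }

/-- The relator family of the presentation `P/T`: the relators of `P` together with,
for each `i`, all words of exponent sum zero in the generators of `Tᵢ`. -/
def relPTgen {X ι : Type} {n : ℕ} (rel : ι → Word X) (XS : Fin n → Set X) :
    ι ⊕ (Σ i : Fin n, ZWords (XS i)) → Word X
  | Sum.inl j => rel j
  | Sum.inr w => w.2.1

namespace LOG

variable {V E : Type}

/-- The relator word `x z y⁻¹ z⁻¹` of an edge `e = [x,z,y]`. -/
def relWord (G : LOG V E) (e : E) : Word V :=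
  [(G.init e, true), (G.label e, true), (G.term e, false), (G.label e, false)]

/-- `P` is injective relative to the family of pairwise disjoint sub-LOTs `Tᵢ = (VS i, ES i)`:
after replacing each edge label lying in `Tᵢ` by a chosen vertex `tᵢ ∈ Tᵢ` and collapsing
each `Tᵢ` to `tᵢ` (encoded by the collapsing map `π`), each vertex occurs at most once
as an edge label. -/
def RelInjective {n : ℕ} (P : LOG V E) (VS : Fin n → Set V) (ES : Fin n → Set E) : Prop :=
  ∀ π : V → V, (∀ v, (∀ i, v ∉ VS i) → π v = v) → (∀ i, ∃ t ∈ VS i, ∀ v ∈ VS i, π v = t) →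
    ∀ e f : E, e ∉ (⋃ i, ES i) → f ∉ (⋃ i, ES i) → π (P.label e) = π (P.label f) → e = f

end LOG

/-- `Q` is a reorientation of `G`: `Q` is obtained from `G` by reversing the orientation
of each edge in some subset of the edges, keeping all labels. -/
def IsReorientation {V E : Type} (G Q : LOG V E) : Prop :=
  Q.label = G.label ∧
    ∀ e, (Q.init e = G.init e ∧ Q.term e = G.term e) ∨
      (Q.init e = G.term e ∧ Q.term e = G.init e)

/-- Replace, in a word, each occurrence `x` by `x⁻¹` and `x⁻¹` by `x`, for every `x ∈ S`. -/
noncomputable def flipWord {X : Type} (S : Set X) (w : Word X) : Word X :=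
  w.map fun l => @ite _ (l.1 ∈ S) (Classical.dec _) (l.1, !l.2) l

/-- Two multigraphs on the same vertex set are equal as multigraphs if there is a
bijection between their edge sets preserving (unordered) endpoints. -/
def MGEquiv {V E₁ E₂ : Type} (G₁ : Multigraph V E₁) (G₂ : Multigraph V E₂) : Prop :=
  ∃ σ : E₁ ≃ E₂, ∀ e, s(G₂.fst (σ e), G₂.snd (σ e)) = s(G₁.fst e, G₁.snd e)


/-!
In the Whitehead graph, inverting every occurrence of a generator `x` just swaps the vertices
`x⁺` and `x⁻`.  The relator `x z y⁻¹ z⁻¹` of an edge `[x,z,y]` contributes the four corners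
`z⁺x⁺, z⁺x⁻, z⁻y⁺, z⁻y⁻`, i.e. `z⁺` is joined to both `x^±` and `z⁻` to both `y^±`.  Swapping
`x^±` or `y^±` therefore changes nothing, while swapping `z^±` yields the corners of the reversed
edge `[y,z,x]`.  Since a label in `S` labels exactly one edge, namely a reversed one, and the
other edges keep their orientation, `W(P_S)` and `W(Q)` agree relator by relator.

For `P/T` it remains to compare the corners of the added relators.  Over a pair of vertices
whose generators both lie in one `Tᵢ` there are countably infinitely many of them (padded test
words), over any other pair none; swapping `x⁺` and `x⁻` preserves this dichotomy.
-/

namespace Multigraph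

variable {V E : Type}

def ends (G : Multigraph V E) (e : E) : Sym2 V := s(G.fst e, G.snd e)

abbrev fiber (G : Multigraph V E) (p : Sym2 V) : Type := {e // G.ends e = p}

end Multigraph

theorem mgEquiv_iff {V E₁ E₂ : Type} {G₁ : Multigraph V E₁} {G₂ : Multigraph V E₂} :
    MGEquiv G₁ G₂ ↔ ∃ σ : E₁ ≃ E₂, ∀ e, G₂.ends (σ e) = G₁.ends e :=
  Iff.rfl

theorem MGEquiv.of_fiber_equiv {V E₁ E₂ : Type} {G₁ : Multigraph V E₁} {G₂ : Multigraph V E₂}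
    (h : ∀ p, Nonempty (G₁.fiber p ≃ G₂.fiber p)) : MGEquiv G₁ G₂ := by
  have σ := fun p => (h p).some
  refine ⟨(Equiv.sigmaFiberEquiv G₁.ends).symm.trans
    ((Equiv.sigmaCongrRight σ).trans (Equiv.sigmaFiberEquiv G₂.ends)), fun e => ?_⟩
  exact (σ _ ⟨e, rfl⟩).2

section Words

variable {X : Type}

def cornerList (w : Word X) : List (Sym2 (X × Bool)) :=
  List.ofFn fun i : Fin w.length =>
    s(((w.get i).1, !(w.get i).2), w.get ⟨((i : ℕ) + 1) % w.length, Nat.mod_lt _ i.pos⟩)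

@[simp]
theorem length_cornerList (w : Word X) : (cornerList w).length = w.length := by
  simp [cornerList]

theorem whitehead_ends {ι : Type} (r : ι → Word X) (d : Corners r) :
    (whitehead r).ends d = (cornerList (r d.1))[(d.2 : ℕ)]'(by simp) := by
  simp [cornerList, whitehead, Multigraph.ends]

def Corners.congr {ι : Type} {r r' : ι → Word X}
    (σ : ∀ j, Fin (r j).length ≃ Fin (r' j).length) : Corners r ≃ Corners r' :=
  Equiv.sigmaCongrRight σ

@[simp]
theorem Corners.congr_apply_fst {ι : Type} {r r' : ι → Word X}
    (σ : ∀ j, Fin (r j).length ≃ Fin (r' j).length) (d : Corners r) :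
    (Corners.congr σ d).1 = d.1 :=
  rfl

@[simp]
theorem Corners.congr_apply_snd {ι : Type} {r r' : ι → Word X}
    (σ : ∀ j, Fin (r j).length ≃ Fin (r' j).length) (d : Corners r) :
    ((Corners.congr σ d).2 : ℕ) = σ d.1 d.2 :=
  rfl

theorem MGEquiv.whitehead_of_perm {ι : Type} {r r' : ι → Word X}
    (h : ∀ j, (cornerList (r j)).Perm (cornerList (r' j))) :
    MGEquiv (whitehead r) (whitehead r') := by
  classical
  let σ : ∀ j, Fin (r j).length ≃ Fin (r' j).length := fun j =>
    (finCongr (length_cornerList _).symm).trans <|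
      (⟨(h j).idxBij, (h j).symm.idxBij, fun _ => (h j).idxBij_symm_idxBij,
        fun _ => (h j).idxBij_idxBij_symm⟩ : _ ≃ _).trans (finCongr (length_cornerList _))
  refine mgEquiv_iff.2 ⟨Corners.congr σ, fun d => ?_⟩
  rw [whitehead_ends, whitehead_ends]
  exact (h d.1).getElem_idxBij_eq_getElem _

theorem MGEquiv.whitehead_sum {ι₁ ι₂ : Type} {r r' : ι₁ ⊕ ι₂ → Word X}
    (h₁ : MGEquiv (whitehead (r ∘ Sum.inl)) (whitehead (r' ∘ Sum.inl)))
    (h₂ : MGEquiv (whitehead (r ∘ Sum.inr)) (whitehead (r' ∘ Sum.inr))) :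
    MGEquiv (whitehead r) (whitehead r') := by
  obtain ⟨σ₁, hσ₁⟩ := h₁
  obtain ⟨σ₂, hσ₂⟩ := h₂
  let split : ∀ r : ι₁ ⊕ ι₂ → Word X,
      Corners r ≃ Corners (r ∘ Sum.inl) ⊕ Corners (r ∘ Sum.inr) := fun r =>
    Equiv.sumSigmaDistrib _
  refine ⟨(split r).trans ((σ₁.sumCongr σ₂).trans (split r').symm), ?_⟩
  rintro ⟨j | j, i⟩
  · exact hσ₁ ⟨j, i⟩
  · exact hσ₂ ⟨j, i⟩

end Words

section Flip

variable {X : Type}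

noncomputable def flipLetter (S : Set X) (l : X × Bool) : X × Bool :=
  @ite _ (l.1 ∈ S) (Classical.dec _) (l.1, !l.2) l

theorem flipWord_eq_map (S : Set X) (w : Word X) : flipWord S w = w.map (flipLetter S) := rfl

@[simp]
theorem flipLetter_mem (S : Set X) {x : X} (hx : x ∈ S) (b : Bool) :
    flipLetter S (x, b) = (x, !b) := by
  simp [flipLetter, hx]

@[simp]
theorem flipLetter_not_mem (S : Set X) {x : X} (hx : x ∉ S) (b : Bool) :
    flipLetter S (x, b) = (x, b) := by
  simp [flipLetter, hx]

theorem flipLetter_fst (S : Set X) (l : X × Bool) : (flipLetter S l).1 = l.1 := by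
  by_cases h : l.1 ∈ S <;> simp [flipLetter, h]

theorem flipLetter_involutive (S : Set X) : Function.Involutive (flipLetter S) := by
  rintro ⟨x, b⟩
  by_cases h : x ∈ S <;> simp [h]

theorem sym2Map_flipLetter_involutive (S : Set X) :
    Function.Involutive (Sym2.map (flipLetter S)) := fun q => by
  rw [Sym2.map_map, (flipLetter_involutive S).comp_self, Sym2.map_id, id]

theorem sym2Map_fst_flipLetter (S : Set X) (q : Sym2 (X × Bool)) :
    (q.map (flipLetter S)).map Prod.fst = q.map Prod.fst := by
  rw [Sym2.map_map]
  exact congrArg (Sym2.map · q) (funext (flipLetter_fst S))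

theorem flipLetter_mk_not (S : Set X) (l : X × Bool) :
    flipLetter S (l.1, !l.2) = ((flipLetter S l).1, !(flipLetter S l).2) := by
  by_cases h : l.1 ∈ S <;> simp [flipLetter, h]

theorem cornerList_flipWord (S : Set X) (w : Word X) :
    cornerList (flipWord S w) = (cornerList w).map (Sym2.map (flipLetter S)) := by
  refine List.ext_getElem (by simp [flipWord_eq_map]) fun i _ _ => ?_
  simp [cornerList, flipWord_eq_map, flipLetter_mk_not]

end Flip

section EdgeRelators

variable {X V E : Type}

def joinBoth (c : X × Bool) (v : X) : Multiset (Sym2 (X × Bool)) :=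
  {s(c, (v, true)), s(c, (v, false))}

theorem map_flipLetter_joinBoth (S : Set X) (c : X × Bool) (v : X) :
    (joinBoth c v).map (Sym2.map (flipLetter S)) = joinBoth (flipLetter S c) v := by
  by_cases hv : v ∈ S
  · simpa [joinBoth, hv] using Multiset.pair_comm _ _
  · simp [joinBoth, hv]

theorem LOG.coe_cornerList_relWord (G : LOG V E) (e : E) :
    (cornerList (G.relWord e) : Multiset (Sym2 (V × Bool))) =
      joinBoth (G.label e, true) (G.init e) + joinBoth (G.label e, false) (G.term e) := by
  simp [cornerList, LOG.relWord, List.ofFn_succ, joinBoth, ← Multiset.cons_coe]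
  rw [Sym2.eq_swap (a := (G.init e, false)), Sym2.eq_swap (a := (G.term e, true))]
  simp only [← Multiset.cons_zero, Multiset.cons_swap]

theorem LOG.cornerList_flipWord_relWord_perm (P Q : LOG V E) (S : Set V) (e : E)
    (hlabel : Q.label e = P.label e)
    (hmem : P.label e ∈ S → Q.init e = P.term e ∧ Q.term e = P.init e)
    (hnmem : P.label e ∉ S → Q.init e = P.init e ∧ Q.term e = P.term e) :
    (cornerList (flipWord S (P.relWord e))).Perm (cornerList (Q.relWord e)) := by
  rw [← Multiset.coe_eq_coe, cornerList_flipWord, ← Multiset.map_coe,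
    LOG.coe_cornerList_relWord, LOG.coe_cornerList_relWord, Multiset.map_add,
    map_flipLetter_joinBoth, map_flipLetter_joinBoth, hlabel]
  by_cases hz : P.label e ∈ S
  · obtain ⟨hinit, hterm⟩ := hmem hz
    rw [hinit, hterm, flipLetter_mem _ hz, flipLetter_mem _ hz, Bool.not_true, Bool.not_false,
      add_comm]
  · obtain ⟨hinit, hterm⟩ := hnmem hz
    rw [hinit, hterm, flipLetter_not_mem _ hz, flipLetter_not_mem _ hz]

end EdgeRelators

section Reorientation

variable {V E : Type} {P Q : LOG V E} {S : Set V}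

theorem IsReorientation.reversed_of_label_mem (hreor : IsReorientation P Q)
    (hS : S = P.label '' { e | ¬(Q.init e = P.init e ∧ Q.term e = P.term e) })
    (hSonce : ∀ x ∈ S, ∃! e, P.label e = x) {e : E} (he : P.label e ∈ S) :
    Q.init e = P.term e ∧ Q.term e = P.init e := by
  obtain ⟨f, hf, hfe⟩ : ∃ f, ¬(Q.init f = P.init f ∧ Q.term f = P.term f) ∧ P.label f = P.label e :=
    by rw [hS] at he; exact he
  obtain rfl : f = e := (hSonce _ he).unique hfe rfl
  exact (hreor.2 f).resolve_left hf

theorem orientation_kept_of_label_not_mem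
    (hS : S = P.label '' { e | ¬(Q.init e = P.init e ∧ Q.term e = P.term e) })
    {e : E} (he : P.label e ∉ S) :
    Q.init e = P.init e ∧ Q.term e = P.term e := by
  by_contra hkept
  exact he (hS ▸ ⟨e, hkept, rfl⟩)

theorem IsReorientation.whitehead_flipWord_relWord (hreor : IsReorientation P Q)
    (hS : S = P.label '' { e | ¬(Q.init e = P.init e ∧ Q.term e = P.term e) })
    (hSonce : ∀ x ∈ S, ∃! e, P.label e = x) :
    MGEquiv (whitehead fun e => flipWord S (P.relWord e)) (whitehead Q.relWord) :=
  MGEquiv.whitehead_of_perm fun e =>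
    P.cornerList_flipWord_relWord_perm Q S e (congrFun hreor.1 e)
      (hreor.reversed_of_label_mem hS hSonce) (orientation_kept_of_label_not_mem hS)

end Reorientation

section FlipFibers

variable {X ι : Type}

theorem whitehead_ends_flipWord (S : Set X) (r : ι → Word X) (d : Corners r) :
    (whitehead fun j => flipWord S (r j)).ends
        (Corners.congr (fun j => finCongr (by simp [flipWord_eq_map])) d) =
      ((whitehead r).ends d).map (flipLetter S) := by
  simp [whitehead_ends, cornerList_flipWord]

noncomputable def fiberFlipEquiv (S : Set X) (r : ι → Word X) (p : Sym2 (X × Bool)) :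
    (whitehead r).fiber (p.map (flipLetter S)) ≃ (whitehead fun j => flipWord S (r j)).fiber p :=
  (Corners.congr fun j => finCongr (by simp [flipWord_eq_map])).subtypeEquiv fun d => by
    rw [whitehead_ends_flipWord, (sym2Map_flipLetter_involutive S).eq_iff]

end FlipFibers

section ZeroSumWords

variable {X κ : Type}

/-- The relators `U₁ ∪ … ∪ Uₙ` adjoined in `P/T`. -/
def relU (XS : κ → Set X) : (Σ i, ZWords (XS i)) → Word X := fun w => w.2.1

theorem expSum_append_map_not (w : Word X) :
    expSum (w ++ w.map fun l => (l.1, !l.2)) = 0 := by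
  rw [expSum, List.map_append, List.sum_append, List.map_map, ← List.sum_map_add]
  refine List.sum_eq_zero fun m hm => ?_
  obtain ⟨⟨v, b⟩, -, rfl⟩ := List.mem_map.1 hm
  cases b <;> rfl

/-- The padding `k` only serves to make these words pairwise distinct. -/
def paddedWord (a b : X × Bool) (k : ℕ) : Word X :=
  (a :: b :: List.replicate k a) ++ (a :: b :: List.replicate k a).map fun l => (l.1, !l.2)

theorem length_paddedWord (a b : X × Bool) (k : ℕ) : (paddedWord a b k).length = 2 * k + 4 := by
  simp [paddedWord]; ring

theorem fst_mem_of_mem_paddedWord {Xs : Set X} {a b : X × Bool} (ha : a.1 ∈ Xs) (hb : b.1 ∈ Xs)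
    {k : ℕ} : ∀ l ∈ paddedWord a b k, l.1 ∈ Xs := by
  simp only [paddedWord, List.mem_append, List.mem_cons, List.mem_map, List.mem_replicate]
  aesop

theorem infinite_fiber_relU (XS : κ → Set X) {q : Sym2 (X × Bool)} {i : κ}
    (hq : ∀ v ∈ q.map Prod.fst, v ∈ XS i) : Infinite ((whitehead (relU XS)).fiber q) := by
  induction q using Sym2.ind with | _ c b => ?_
  have hc : c.1 ∈ XS i := hq _ (Sym2.mem_map.2 ⟨c, Sym2.mem_mk_left c b, rfl⟩)
  have hb : b.1 ∈ XS i := hq _ (Sym2.mem_map.2 ⟨b, Sym2.mem_mk_right c b, rfl⟩)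
  let word (k : ℕ) : Σ i, ZWords (XS i) :=
    ⟨i, paddedWord (c.1, !c.2) b k, fst_mem_of_mem_paddedWord (a := (c.1, !c.2)) hc hb,
      expSum_append_map_not _⟩
  have hlen (k : ℕ) : (relU XS (word k)).length = 2 * k + 4 := length_paddedWord _ _ k
  let corner (k : ℕ) : (whitehead (relU XS)).fiber s(c, b) :=
    ⟨⟨word k, ⟨0, by rw [hlen]; omega⟩⟩, by
      simp [Multigraph.ends, whitehead, relU, word, paddedWord]⟩
  refine Infinite.of_injective corner fun k k' h => ?_
  have := congrArg (fun d => (relU XS d.1.1).length) h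
  simp only [corner, hlen] at this
  omega

theorem isEmpty_fiber_relU (XS : κ → Set X) {q : Sym2 (X × Bool)}
    (hq : ¬∃ i, ∀ v ∈ q.map Prod.fst, v ∈ XS i) : IsEmpty ((whitehead (relU XS)).fiber q) := by
  refine ⟨fun ⟨⟨⟨i, w⟩, pos⟩, hd⟩ => hq ⟨i, fun v hv => ?_⟩⟩
  subst hd
  simp only [Multigraph.ends, Sym2.map_mk, Sym2.mem_iff] at hv
  rcases hv with rfl | rfl
  exacts [w.2.1 (w.1.get pos) (List.get_mem _ _), w.2.1 _ (List.get_mem _ _)]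

instance [Countable X] (Xs : Set X) : Countable (ZWords Xs) := by
  unfold ZWords; infer_instance

instance {ι : Type} [Countable X] [Countable ι] (r : ι → Word X) : Countable (Corners r) := by
  unfold Corners; infer_instance

open Classical in
theorem mk_fiber_relU [Countable X] [Countable κ] (XS : κ → Set X) (q : Sym2 (X × Bool)) :
    Cardinal.mk ((whitehead (relU XS)).fiber q) =
      if ∃ i, ∀ v ∈ q.map Prod.fst, v ∈ XS i then Cardinal.aleph0 else 0 := by
  split_ifs with hq
  · obtain ⟨i, hi⟩ := hq
    have := infinite_fiber_relU XS hi
    exact Cardinal.mk_eq_aleph0 _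
  · have := isEmpty_fiber_relU XS hq
    exact Cardinal.mk_eq_zero _

theorem whitehead_flipWord_relU [Countable X] [Countable κ] (S : Set X) (XS : κ → Set X) :
    MGEquiv (whitehead fun w => flipWord S (relU XS w)) (whitehead (relU XS)) := by
  refine MGEquiv.of_fiber_equiv fun p => ?_
  refine ⟨(fiberFlipEquiv S (relU XS) p).symm.trans (Classical.choice (Cardinal.eq.1 ?_))⟩
  rw [mk_fiber_relU, mk_fiber_relU, sym2Map_fst_flipLetter]

end ZeroSumWords

theorem whitehead_flip_eq_reorient_general {V E : Type} [Fintype V] {n : ℕ}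
    (P Q : LOG V E)
    (VS : Fin n → Set V)
    (hreor : IsReorientation P Q)
    (S : Set V)
    (hS : S = P.label '' { e | ¬(Q.init e = P.init e ∧ Q.term e = P.term e) })
    (hSonce : ∀ x ∈ S, ∃! e, P.label e = x) :
    MGEquiv (whitehead fun e => flipWord S (P.relWord e)) (whitehead Q.relWord) ∧
      MGEquiv (whitehead fun k => flipWord S (relPTgen P.relWord VS k))
        (whitehead (relPTgen Q.relWord VS)) := by
  have hedges := hreor.whitehead_flipWord_relWord hS hSonce
  exact ⟨hedges, MGEquiv.whitehead_sum hedges (whitehead_flipWord_relU S VS)⟩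

/-- **The Whitehead graphs of `P_S` and `Q` agree.**
Let `P` be a labeled oriented tree whose maximal proper sub-LOTs `T₁, …, Tₙ` are pairwise
disjoint, with union `T`, and assume `P` is injective relative to `T`.  Let `Q` be a
reorientation of `P` in which only edges of `P − T` are reversed, and let `S` be the set
of labels of the reversed edges (so each element of `S` occurs exactly once as an edge
label in `P`).  Let `P_S` be obtained from the LOT presentation `P` by inverting all
occurrences of generators in `S` in every relator.  Then `W(P_S) = W(Q)`, and moreover
`W((P/T)_S) = W(Q/T)`, as multigraphs. -/
theorem whitehead_flip_eq_reorient {V E : Type} [Fintype V] [Fintype E] {n : ℕ}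
    (P Q : LOG V E) (htree : P.IsTreeGraph)
    (VS : Fin n → Set V) (ES : Fin n → Set E)
    (hmax : ∀ i, P.IsMaxProperSubLOT (VS i) (ES i))
    (hcompl : ∀ VS' ES', P.IsMaxProperSubLOT VS' ES' → ∃ i, VS' = VS i ∧ ES' = ES i)
    (hdisj : ∀ i j, i ≠ j → VS i ∩ VS j = ∅)
    (hrelinj : P.RelInjective VS ES)
    (hreor : IsReorientation P Q)
    (hfixT : ∀ e ∈ ⋃ i, ES i, Q.init e = P.init e ∧ Q.term e = P.term e)
    (S : Set V)
    (hS : S = P.label '' { e | ¬(Q.init e = P.init e ∧ Q.term e = P.term e) })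
    (hSonce : ∀ x ∈ S, ∃! e, P.label e = x) :
    MGEquiv (whitehead fun e => flipWord S (P.relWord e)) (whitehead Q.relWord) ∧
      MGEquiv (whitehead fun k => flipWord S (relPTgen P.relWord VS k))
        (whitehead (relPTgen Q.relWord VS)) :=
  whitehead_flip_eq_reorient_general P Q VS hreor S hS hSonce
end

section
/- Let P be a reduced labeled oriented tree and let T be a maximal proper sub-LOT of P. If e = [a,c,b] is an edge of P not contained in T whose label c is a vertex of T, then neither the initial vertex a nor the terminal vertex b of e is a vertex of T. -/
namespace LOG

variable {V E : Type}

/-- A LOG is compressed if no edge is labeled with one of its own endpoints. -/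
def Compressed (G : LOG V E) : Prop := ∀ e, G.label e ≠ G.init e ∧ G.label e ≠ G.term e

/-- A LOG is boundary reduced if every boundary vertex (vertex of valency one)
occurs as an edge label. -/
def BoundaryReduced (G : LOG V E) : Prop :=
  ∀ v : V, (∃! e, G.init e = v ∨ G.term e = v) → ∃ e, G.label e = v

/-- A LOG is interior reduced if no vertex has two adjacent edges with the same label
that both point away from, or both point towards, that vertex. -/
def InteriorReduced (G : LOG V E) : Prop :=
  ∀ e f, e ≠ f → G.label e = G.label f → G.init e ≠ G.init f ∧ G.term e ≠ G.term f

/-- A LOG is reduced if it is compressed, boundary reduced and interior reduced. -/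
def Reduced (G : LOG V E) : Prop := G.Compressed ∧ G.BoundaryReduced ∧ G.InteriorReduced

end LOG

/-!
If one endpoint of `e` lay in `T`, then adding `e` and its other endpoint to `T` would give a
sub-LOT strictly larger than `T`; by maximality it contains every edge of `P`. If both endpoints
were in `T`, then `T` would already connect them without using `e`, so `e` would not be a bridge
of the tree. If only one was, the other would be a boundary vertex of `P` whose only edge is `e`;
being boundary reduced, it is the label of some edge, but every label lies in `T`.
-/

namespace LOG

variable {V E : Type} {G : LOG V E} {VS VS' : Set V} {ES ES' : Set E}

theorem subgraph_adj {u v : VS} :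
    (G.subgraph VS ES).Adj u v ↔ u ≠ v ∧ ∃ f ∈ ES, s(G.init f, G.term f) = s((u : V), v) := by
  simp only [subgraph, SimpleGraph.fromRel_adj, Sym2.eq_iff]
  grind

def subgraphHomOfSubset (hV : VS ⊆ VS') (hE : ES ⊆ ES') :
    G.subgraph VS ES →g G.subgraph VS' ES' where
  toFun v := ⟨v, hV v.2⟩
  map_rel' {u v} huv := by
    rw [subgraph_adj] at huv ⊢
    obtain ⟨hne, f, hf, hfuv⟩ := huv
    exact ⟨fun h => hne (Subtype.ext (Subtype.mk.inj h)), f, hE hf, hfuv⟩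

theorem IsSubLOT.insert_edge (hT : G.IsSubLOT VS ES) {e : E} (hc : G.label e ∈ VS)
    (hend : G.init e ∈ VS ∨ G.term e ∈ VS) :
    G.IsSubLOT (VS ∪ {G.init e, G.term e}) (insert e ES) := by
  set a := G.init e
  set b := G.term e
  refine ⟨⟨e, .inl rfl⟩, ?_, ?_, ?_, ?_⟩
  · rintro f (rfl | hf)
    exacts [.inr (.inl rfl), .inl (hT.init_mem f hf)]
  · rintro f (rfl | hf)
    exacts [.inr (.inr rfl), .inl (hT.term_mem f hf)]
  · rintro f (rfl | hf)
    exacts [.inl hc, .inl (hT.label_mem f hf)]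
  set T' := G.subgraph (VS ∪ {a, b}) (insert e ES)
  let a' : ↥(VS ∪ {a, b}) := ⟨a, .inr (.inl rfl)⟩
  let b' : ↥(VS ∪ {a, b}) := ⟨b, .inr (.inr rfl)⟩
  have hab : T'.Reachable a' b' := by
    by_cases h : a' = b'
    · rw [h]
    · exact SimpleGraph.Adj.reachable (subgraph_adj.2 ⟨h, e, .inl rfl, rfl⟩)
  have hVS : ∀ x (hx : x ∈ VS), T'.Reachable ⟨x, .inl hx⟩ a' := by
    intro x hx
    rcases hend with ha | hb
    · exact (hT.connected.preconnected ⟨x, hx⟩ ⟨a, ha⟩).map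
        (subgraphHomOfSubset Set.subset_union_left (Set.subset_insert e ES))
    · exact ((hT.connected.preconnected ⟨x, hx⟩ ⟨b, hb⟩).map
        (subgraphHomOfSubset Set.subset_union_left (Set.subset_insert e ES))).trans hab.symm
  refine (SimpleGraph.connected_iff_exists_forall_reachable _).2 ⟨a', ?_⟩
  rintro ⟨x, hx | rfl | rfl⟩
  exacts [(hVS x hx).symm, .rfl, hab]

theorem IsMaxProperSubLOT.edges_eq_univ (hmax : G.IsMaxProperSubLOT VS ES)
    (hT' : G.IsSubLOT VS' ES') (hV : VS ⊆ VS') (hE : ES ⊂ ES') : ES' = Set.univ := by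
  by_contra hne
  exact hE.ne (hmax.2 VS' ES' ⟨hT', fun h => hne h.2⟩ hV hE.subset).2

def subgraphHomDeleteEdge (hinj : Function.Injective fun f => s(G.init f, G.term f)) {e : E} (he : e ∉ ES) :
    G.subgraph VS ES →g G.graph.deleteEdges {s(G.init e, G.term e)} where
  toFun := Subtype.val
  map_rel' {u v} huv := by
    obtain ⟨hne, f, hf, hfuv⟩ := subgraph_adj.1 huv
    refine SimpleGraph.deleteEdges_adj.2 ⟨?_, ?_⟩
    · simp only [graph, SimpleGraph.fromRel_adj]
      rcases Sym2.eq_iff.1 hfuv with ⟨h1, h2⟩ | ⟨h1, h2⟩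
      exacts [⟨fun h => hne (Subtype.ext h), .inl ⟨f, h1, h2⟩⟩,
        ⟨fun h => hne (Subtype.ext h), .inr ⟨f, h1, h2⟩⟩]
    · intro hfe
      exact he (hinj (hfuv.trans hfe) ▸ hf)

theorem IsTreeGraph.not_reachable_endpoints (htree : G.IsTreeGraph) {e : E} (he : e ∉ ES)
    (ha : G.init e ∈ VS) (hb : G.term e ∈ VS) :
    ¬(G.subgraph VS ES).Reachable ⟨G.init e, ha⟩ ⟨G.term e, hb⟩ := by
  have hadj : G.graph.Adj (G.init e) (G.term e) := by
    simp only [graph, SimpleGraph.fromRel_adj]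
    exact ⟨htree.1 e, .inl ⟨e, rfl, rfl⟩⟩
  have hbridge := SimpleGraph.isAcyclic_iff_forall_adj_isBridge.1 htree.2.2.isAcyclic hadj
  exact fun h => SimpleGraph.isBridge_iff.1 hbridge (h.map (subgraphHomDeleteEdge htree.2.1 he))

theorem IsSubLOT.existsUnique_incident (hT : G.IsSubLOT VS ES) {e : E}
    (hES : ∀ f, f ≠ e → f ∈ ES) {v : V} (hv : v ∉ VS) (hve : G.init e = v ∨ G.term e = v) :
    ∃! f, G.init f = v ∨ G.term f = v := by
  refine ⟨e, hve, fun f hf => ?_⟩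
  by_contra hfe
  rcases hf with rfl | rfl
  exacts [hv (hT.init_mem f (hES f hfe)), hv (hT.term_mem f (hES f hfe))]

end LOG

theorem edge_labeled_in_sublot_disjoint_general {V E : Type}
    (P : LOG V E) (htree : P.IsTreeGraph) (hred : P.Reduced)
    (VS : Set V) (ES : Set E) (hmax : P.IsMaxProperSubLOT VS ES)
    (e : E) (he : e ∉ ES) (hc : P.label e ∈ VS) :
    P.init e ∉ VS ∧ P.term e ∉ VS := by
  have hT := hmax.1.1
  rw [← not_or]
  intro hend
  have hall : insert e ES = Set.univ := hmax.edges_eq_univ (hT.insert_edge hc hend)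
    Set.subset_union_left (Set.ssubset_insert he)
  have hES (f : E) (hf : f ≠ e) : f ∈ ES := (hall ▸ Set.mem_univ f).resolve_left hf
  have hlabel (f : E) : P.label f ∈ VS := by
    by_cases hf : f = e
    exacts [hf ▸ hc, hT.label_mem f (hES f hf)]
  by_cases hboth : P.init e ∈ VS ∧ P.term e ∈ VS
  · exact htree.not_reachable_endpoints he hboth.1 hboth.2 (hT.connected.preconnected _ _)
  obtain ⟨v, hv, hve⟩ : ∃ v ∉ VS, P.init e = v ∨ P.term e = v := by
    rcases hend with h | h
    exacts [⟨P.term e, fun h' => hboth ⟨h, h'⟩, .inr rfl⟩,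
      ⟨P.init e, fun h' => hboth ⟨h', h⟩, .inl rfl⟩]
  obtain ⟨f, hf⟩ := hred.2.1 v (hT.existsUnique_incident hES hv hve)
  exact hv (hf ▸ hlabel f)

/-- **Edges attached to a maximal proper sub-LOT of a reduced LOT.**
Let `P` be a reduced labeled oriented tree and let `T = (VS, ES)` be a maximal proper
sub-LOT of `P`.  If `e = [a,c,b]` is an edge of `P` not contained in `T` whose label `c`
is a vertex of `T`, then neither the initial vertex `a` nor the terminal vertex `b` of
`e` is a vertex of `T`. -/
theorem edge_labeled_in_sublot_disjoint {V E : Type} [Fintype V] [Fintype E]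
    (P : LOG V E) (htree : P.IsTreeGraph) (hred : P.Reduced)
    (VS : Set V) (ES : Set E) (hmax : P.IsMaxProperSubLOT VS ES)
    (e : E) (he : e ∉ ES) (hc : P.label e ∈ VS) :
    P.init e ∉ VS ∧ P.term e ∉ VS :=
  edge_labeled_in_sublot_disjoint_general P htree hred VS ES hmax e he hc
end
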